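/- The ordinal space ω₁ + 1 with the order topology has no monotone closure-preserving operator. -/

import Mathlib

open Set Topology Filter

variable {X : Type*}

/-- A family `F` of subsets is closure-preserving if for every subfamily `H ⊆ F`,
the closure of the union of `H` is the union of the closures of members of `H`. -/
def ClosurePreserving [TopologicalSpace X] (F : Set (Set X)) : Prop :=
  ∀ H ⊆ F, closure (⋃₀ H) = ⋃ A ∈ H, closure A

/-- A cover `A` refines a cover `B` if every member of `A` is contained in some member of `B`. -/
def Refines (A B : Set (Set X)) : Prop :=
  ∀ s ∈ A, ∃ t ∈ B, s ⊆ t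

/-- An open cover of the space. -/
def IsOpenCover [TopologicalSpace X] (U : Set (Set X)) : Prop :=
  (∀ s ∈ U, IsOpen s) ∧ ⋃₀ U = Set.univ

/-- A monotone closure-preserving operator: assigns to each open cover `U` a
closure-preserving cover `r U` (by arbitrary sets) refining `U`, monotonically. -/
def MonotoneCPOperator [TopologicalSpace X] (r : Set (Set X) → Set (Set X)) : Prop :=
  (∀ U, IsOpenCover U →
    ⋃₀ r U = Set.univ ∧ Refines (r U) U ∧ ClosurePreserving (r U)) ∧
  ∀ U V, IsOpenCover U → IsOpenCover V → Refines U V → Refines (r U) (r V)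

/-- A GO-space: the topology is finer than the order topology (all open rays are open)
and has a base of order-convex sets. -/
def IsGOSpace (X : Type*) [LinearOrder X] [TopologicalSpace X] : Prop :=
  (∀ a : X, IsOpen (Set.Iio a)) ∧ (∀ a : X, IsOpen (Set.Ioi a)) ∧
  ∀ s : Set X, IsOpen s → ∀ x ∈ s, ∃ t : Set X, IsOpen t ∧ x ∈ t ∧ t ⊆ s ∧ t.OrdConnected

/-!
For `η < Ω` let `V η` be the open cover `{(η, →)} ∪ {(←, β] : β < Ω}`. Closure preservation of
`r (V η)` at `Ω` shows that every member of `r (V η)` lies either in `(η, →)` or in `(←, η']`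
for one fixed `η' < Ω`. Since `Ω` has uncountable cofinality, iterating `η ↦ η'` yields an
increasing sequence whose supremum `λ` is still below `Ω`. By monotonicity `r (V λ)` refines
every `r (V ηₙ)`, so each member of `r (V λ)` whose closure contains `λ` lies in `[λ, →)`.
But `λ` is a limit of points below it, and closure preservation of `r (V λ)` at `λ` produces a
member with `λ` in its closure that meets `(←, λ)`.
-/

open scoped Cardinal

theorem ClosurePreserving.exists_mem_closure_of_mem_closure_sUnion [TopologicalSpace X]
    {F H : Set (Set X)} (hF : ClosurePreserving F) (hH : H ⊆ F) {x : X}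
    (hx : x ∈ closure (⋃₀ H)) : ∃ A ∈ H, x ∈ closure A := by
  simpa [hF H hH] using hx

theorem ClosurePreserving.exists_mem_closure_not_subset_Ici [Preorder X] [TopologicalSpace X]
    {F : Set (Set X)} (hF : ClosurePreserving F) (hcover : ⋃₀ F = univ) {x : X}
    (hx : x ∈ closure (Iio x)) : ∃ A ∈ F, x ∈ closure A ∧ ¬ A ⊆ Ici x := by
  have hIio : Iio x ⊆ ⋃₀ {A ∈ F | ¬ A ⊆ Ici x} := fun y hy ↦ by
    obtain ⟨A, hA, hyA⟩ := hcover.symm.subset (mem_univ y)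
    exact ⟨A, ⟨hA, fun hAx ↦ hy.not_ge (hAx hyA)⟩, hyA⟩
  obtain ⟨A, ⟨hA, hAx⟩, hxA⟩ :=
    hF.exists_mem_closure_of_mem_closure_sUnion (sep_subset _ _) (closure_mono hIio hx)
  exact ⟨A, hA, hxA, hAx⟩

theorem exists_gt_of_countable_of_aleph0_lt_cof [LinearOrder X] {Ω : X}
    (hΩ : ℵ₀ < Order.cof (Iio Ω)) {s : Set X} (hs : s.Countable) (hsΩ : s ⊆ Iio Ω) :
    ∃ b < Ω, ∀ x ∈ s, x < b := by
  have hcount : (Subtype.val ⁻¹' s : Set (Iio Ω)).Countable :=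
    hs.preimage Subtype.val_injective
  have hcof : ¬ IsCofinal (Subtype.val ⁻¹' s : Set (Iio Ω)) := fun hcof ↦
    (Order.cof_le hcof).trans (Cardinal.mk_le_aleph0_iff.2 hcount.to_subtype) |>.not_gt hΩ
  obtain ⟨⟨b, hb⟩, hsb⟩ := not_isCofinal_iff.1 hcof
  exact ⟨b, hb, fun x hx ↦ hsb ⟨x, hsΩ hx⟩ hx⟩

theorem BddAbove.exists_isLUB [LinearOrder X] [WellFoundedLT X] {s : Set X} (hs : BddAbove s) :
    ∃ a, IsLUB s a := by
  obtain ⟨a, ha, hmin⟩ := wellFounded_lt.has_min _ hs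
  exact ⟨a, ha, fun b hb ↦ not_lt.1 (hmin b hb)⟩

theorem exists_seq_of_forall_exists_gt [Preorder X] {Ω : X} {R : X → X → Prop}
    (h₀ : ∃ a, a < Ω) (h : ∀ η < Ω, ∃ η', η < η' ∧ η' < Ω ∧ R η η') :
    ∃ e : ℕ → X, StrictMono e ∧ (∀ n, e n < Ω) ∧ ∀ n, R (e n) (e (n + 1)) := by
  obtain ⟨a, ha⟩ := h₀
  choose! g hg using h
  have he : ∀ n, g^[n] a < Ω := fun n ↦ by
    induction n with
    | zero => exact ha
    | succ n ih => rw [Function.iterate_succ_apply']; exact (hg _ ih).2.1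
  refine ⟨fun n ↦ g^[n] a, strictMono_nat_of_lt_succ fun n ↦ ?_, he, fun n ↦ ?_⟩ <;>
    simp only [Function.iterate_succ_apply']
  exacts [(hg _ (he n)).1, (hg _ (he n)).2.2]

theorem exists_isLUB_range_lt_of_aleph0_lt_cof [LinearOrder X] [WellFoundedLT X] {Ω : X}
    (hΩ : ℵ₀ < Order.cof (Iio Ω)) {e : ℕ → X} (he : ∀ n, e n < Ω) :
    ∃ l < Ω, IsLUB (range e) l := by
  obtain ⟨b, hb, heb⟩ := exists_gt_of_countable_of_aleph0_lt_cof hΩ (countable_range e)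
    (range_subset_iff.2 he)
  obtain ⟨l, hl⟩ := BddAbove.exists_isLUB ⟨b, fun x hx ↦ (heb x hx).le⟩
  exact ⟨l, (hl.2 fun x hx ↦ (heb x hx).le).trans_lt hb, hl⟩

theorem isOpen_Iic_of_not_isMax [LinearOrder X] [WellFoundedLT X] [TopologicalSpace X]
    [OrderTopology X] {a : X} (ha : ¬ IsMax a) : IsOpen (Iic a) := by
  let := SuccOrder.ofLinearWellFoundedLT X
  rw [← Order.Iio_succ_of_not_isMax ha]
  exact isOpen_Iio

def rayCover [Preorder X] (Ω η : X) : Set (Set X) :=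
  insert (Ioi η) (Iic '' Iio Ω)

theorem refines_rayCover_of_le [Preorder X] {Ω η η' : X} (h : η ≤ η') :
    Refines (rayCover Ω η') (rayCover Ω η) := by
  rintro s (rfl | hs)
  exacts [⟨Ioi η, Or.inl rfl, Ioi_subset_Ioi h⟩, ⟨s, Or.inr hs, subset_rfl⟩]

section RayCover

variable [LinearOrder X] [TopologicalSpace X] [OrderTopology X] {Ω η : X}

theorem isOpenCover_rayCover [WellFoundedLT X] (hη : η < Ω) : IsOpenCover (rayCover Ω η) := by
  refine ⟨?_, eq_univ_of_forall fun x ↦ ?_⟩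
  · rintro s (rfl | ⟨β, hβ, rfl⟩)
    exacts [isOpen_Ioi, isOpen_Iic_of_not_isMax (not_isMax_of_lt hβ)]
  · rcases le_or_gt x η with hx | hx
    exacts [⟨Iic η, Or.inr ⟨η, hη, rfl⟩, hx⟩, ⟨Ioi η, Or.inl rfl, hx⟩]

/-- The members whose closure misses `Ω` have, by closure preservation, a union whose closure
misses `Ω`; a neighbourhood `(l, Ω]` of `Ω` then bounds them by `l`. -/
theorem ClosurePreserving.exists_lt_forall_subset_Iic_or_subset_Ioi {F : Set (Set X)}
    (hF : ClosurePreserving F) (hFV : Refines F (rayCover Ω η)) (hη : η < Ω) :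
    ∃ l < Ω, ∀ A ∈ F, A ⊆ Iic l ∨ A ⊆ Ioi η := by
  set H := {A ∈ F | Ω ∉ closure A}
  have hΩH : Ω ∉ closure (⋃₀ H) := fun h ↦ by
    obtain ⟨A, hA, hΩA⟩ := hF.exists_mem_closure_of_mem_closure_sUnion (sep_subset _ _) h
    exact hA.2 hΩA
  obtain ⟨l, hl, hlΩ⟩ :=
    exists_Ioc_subset_of_mem_nhds (isClosed_closure.isOpen_compl.mem_nhds hΩH) ⟨η, hη⟩
  refine ⟨l, hl, fun A hA ↦ ?_⟩
  obtain ⟨t, (rfl | ⟨β, hβ, rfl⟩), hAt⟩ := hFV A hA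
  · exact Or.inr hAt
  have hAH : A ∈ H := ⟨hA, fun hΩA ↦
    (closure_minimal hAt isClosed_Iic hΩA).not_gt hβ⟩
  refine Or.inl fun x hxA ↦ not_lt.1 fun hlx ↦ hlΩ ⟨hlx, (hAt hxA).trans hβ.le⟩ ?_
  exact subset_closure ⟨A, hAH, hxA⟩

end RayCover

theorem not_monotoneCPOperator_of_aleph0_lt_cof [LinearOrder X] [WellFoundedLT X]
    [TopologicalSpace X] [OrderTopology X] {Ω : X} (hΩ : ℵ₀ < Order.cof (Iio Ω))
    (r : Set (Set X) → Set (Set X)) : ¬ MonotoneCPOperator r := by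
  rintro ⟨hr, hmono⟩
  have hstep : ∀ η < Ω, ∃ η', η < η' ∧ η' < Ω ∧
      ∀ A ∈ r (rayCover Ω η), A ⊆ Iic η' ∨ A ⊆ Ioi η := fun η hη ↦ by
    obtain ⟨-, hrefine, hcp⟩ := hr _ (isOpenCover_rayCover hη)
    obtain ⟨l, hl, hA⟩ := hcp.exists_lt_forall_subset_Iic_or_subset_Ioi hrefine hη
    obtain ⟨b, hb, hlb⟩ := exists_gt_of_countable_of_aleph0_lt_cof hΩ
      (countable_singleton (max l η)) (singleton_subset_iff.2 (max_lt hl hη))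
    obtain ⟨hlb, hηb⟩ := max_lt_iff.1 (hlb _ rfl)
    exact ⟨b, hηb, hb, fun A h ↦ (hA A h).imp_left fun hAl ↦ hAl.trans (Iic_subset_Iic.2 hlb.le)⟩
  obtain ⟨e, he_mono, heΩ, he_step⟩ := exists_seq_of_forall_exists_gt
    (by simpa using exists_gt_of_countable_of_aleph0_lt_cof hΩ countable_empty (empty_subset _))
    hstep
  obtain ⟨l, hlΩ, hl⟩ := exists_isLUB_range_lt_of_aleph0_lt_cof hΩ heΩ
  have he_lt : ∀ n, e n < l := fun n ↦ (he_mono n.lt_succ_self).trans_le (hl.1 ⟨n + 1, rfl⟩)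
  have hsubset_Ici : ∀ A ∈ r (rayCover Ω l), l ∈ closure A → A ⊆ Ici l := by
    intro A hA hlA x hx
    refine hl.2 ?_
    rintro _ ⟨n, rfl⟩
    obtain ⟨B, hB, hAB⟩ := hmono _ _ (isOpenCover_rayCover hlΩ) (isOpenCover_rayCover (heΩ n))
      (refines_rayCover_of_le (he_lt n).le) A hA
    rcases he_step n B hB with hB_le | hB_gt
    · exact absurd (closure_minimal (hAB.trans hB_le) isClosed_Iic hlA) (he_lt (n + 1)).not_ge
    · exact (hB_gt (hAB hx)).le
  obtain ⟨hcover, -, hcp⟩ := hr _ (isOpenCover_rayCover hlΩ)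
  obtain ⟨A, hA, hlA, hAl⟩ := hcp.exists_mem_closure_not_subset_Ici hcover
    (closure_mono (range_subset_iff.2 he_lt) (hl.mem_closure (range_nonempty e)))
  exact hAl (hsubset_Ici A hA hlA)

theorem Ordinal.cof_Iio_top_Iic (o : Ordinal.{u}) :
    Order.cof (Iio (⟨o, le_rfl⟩ : {x : Ordinal.{u} // x ≤ o})) = Cardinal.lift.{u + 1} o.cof := by
  rw [Ordinal.lift_cof, ← Ordinal.cof_Iio]
  exact Order.cof_congr_of_strictMono (f := fun x ↦ (⟨x.1.1, x.2⟩ : Iio o)) (fun _ _ h ↦ h)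
    fun y ↦ ⟨_, ⟨⟨⟨y.1, y.2.le⟩, y.2⟩, rfl⟩, le_rfl⟩

/-- `ω₁ + 1` with the order topology has no monotone closure-preserving operator. -/
theorem stmt12 :
    ¬ ∃ r : Set (Set {o : Ordinal.{0} // o ≤ (Cardinal.aleph 1).ord}) →
        Set (Set {o : Ordinal.{0} // o ≤ (Cardinal.aleph 1).ord}),
      @MonotoneCPOperator _ (Preorder.topology _) r := by
  rintro ⟨r, hr⟩
  let := Preorder.topology {o : Ordinal.{0} // o ≤ (Cardinal.aleph 1).ord}
  have : OrderTopology {o : Ordinal.{0} // o ≤ (Cardinal.aleph 1).ord} := ⟨rfl⟩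
  refine not_monotoneCPOperator_of_aleph0_lt_cof (Ω := ⟨_, le_rfl⟩) ?_ r hr
  rw [Ordinal.cof_Iio_top_Iic]
  simp
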